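/- arXiv:1206.4523 — 2 statements merged into one kernel-verified Lean document; each statement's English description precedes it below -/
import Mathlib

section
/- Let (R, m) be a commutative Noetherian local ring with Krull dimension dim(R) ≤ 1 and let M be a separated R-module. Then Ass(M̂) = Koatt(M). -/
open IsLocalRing TensorProduct

universe u v w x

/-- `Koatt M`: the set of prime ideals that are annihilators of submodules of `M`. -/
def Koatt (R : Type u) [CommRing R] (M : Type v) [AddCommGroup M] [Module R M] :
    Set (Ideal R) :=
  {p | p.IsPrime ∧ ∃ U : Submodule R M, U.annihilator = p}

/-!
In dimension at most one every prime other than `𝔪` is minimal.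

For `𝔪`, both `𝔪 ∈ Ass M̂` and `𝔪 ∈ Koatt M` are equivalent to `𝔪 ∈ Ass M`: the first because an
element `s` with `𝔪 ^ c ⊆ (s)` that is regular on `M` stays regular on `M̂`.

For a minimal prime `p`: if `p = ann x̂` then `ann M ⊆ p`, and then `p = ann (0 :_M p)` because
some `t ∉ p` kills a power of `p`. Conversely, if `p = ann U`, pick `s ∈ 𝔪 \ p`; no power of `s`
kills `U`, and a diagonal argument produces an `𝔪`-adic limit of elements of `U` killed by no
power of `s`. Its annihilator contains `p`, and any strictly larger ideal `J` contains a power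
of `s`, since `p ⊊ J` forces `√J = 𝔪`.
-/

open Submodule
open scoped Pointwise

section Annihilators

variable {R : Type*} [CommRing R] {M : Type*} [AddCommGroup M] [Module R M]

theorem isAssociatedPrime_of_annihilator_eq {p : Ideal R} (hp : p.IsPrime) {x : M}
    (h : (R ∙ x).annihilator = p) : IsAssociatedPrime p M :=
  ⟨hp, x, by rw [bot_colon', h, hp.radical]⟩

theorem associatedPrimes_subset_koatt [IsNoetherianRing R] :
    associatedPrimes R M ⊆ Koatt R M := by
  intro p hp
  obtain ⟨hp, x, rfl⟩ := isAssociatedPrime_iff.mp hp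
  exact ⟨hp, R ∙ x, bot_colon'.symm⟩

theorem annihilator_span_singleton_eq_of_isMaximal {m : Ideal R} (hm : m.IsMaximal) {x : M}
    (hx : x ≠ 0) (hmx : m ≤ (R ∙ x).annihilator) : (R ∙ x).annihilator = m :=
  (hm.eq_of_le (by simpa [annihilator_eq_top_iff] using hx) hmx).symm

theorem mem_associatedPrimes_of_isMaximal_of_mem_koatt {m : Ideal R} (hm : m.IsMaximal)
    (h : m ∈ Koatt R M) : m ∈ associatedPrimes R M := by
  obtain ⟨-, U, hU⟩ := h
  obtain ⟨x, hxU, hx⟩ := exists_mem_ne_zero_of_ne_bot (fun hU0 : U = ⊥ ↦ hm.ne_top <| by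
    rw [← hU, hU0, annihilator_bot])
  refine isAssociatedPrime_of_annihilator_eq hm.isPrime
    (annihilator_span_singleton_eq_of_isMaximal hm hx ?_)
  exact hU ▸ annihilator_mono ((span_singleton_le_iff_mem x U).mpr hxU)

theorem mem_associatedPrimes_of_torsionBy_ne_bot [IsNoetherianRing R] {m : Ideal R}
    (hm : m.IsMaximal) {s : R} {c : ℕ} (hc : m ^ c ≤ Ideal.span {s})
    (hs : torsionBy R M s ≠ ⊥) : m ∈ associatedPrimes R M := by
  obtain ⟨x, hxs, hx⟩ := exists_mem_ne_zero_of_ne_bot hs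
  obtain ⟨P, hP, hxP⟩ := exists_le_isAssociatedPrime_of_isNoetherianRing R x hx
  have hsP : Ideal.span {s} ≤ P := by
    rw [Ideal.span_le, Set.singleton_subset_iff]
    exact hxP (by simpa [mem_colon_singleton] using hxs)
  rwa [hm.eq_of_le hP.isPrime.ne_top (hP.isPrime.le_of_pow_le (hc.trans hsP))]

theorem Ideal.exists_notMem_forall_mem_pow_mul_eq_zero [IsNoetherianRing R] {p : Ideal R}
    (hp : p ∈ minimalPrimes R) : ∃ t ∉ p, ∃ n, ∀ a ∈ p ^ n, t * a = 0 := by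
  classical
  have hpp := IsMinimalPrime.isPrime hp
  have hfin := minimalPrimes.finite_of_isNoetherianRing R
  set J := (hfin.toFinset.erase p).inf id
  have hJp : ¬ J ≤ p := by
    rw [hpp.inf_le']
    rintro ⟨q, hq, hqp⟩
    rw [Finset.mem_erase, Set.Finite.mem_toFinset] at hq
    exact hq.1 (le_antisymm hqp (hp.2 hq.2.1 hqp))
  have hnil : p ⊓ J = nilradical R := by
    rw [nilradical, ← Ideal.sInf_minimalPrimes, Ideal.zero_eq_bot]
    change _ = sInf (minimalPrimes R)
    rw [← hfin.coe_toFinset, ← Finset.inf_id_eq_sInf,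
      ← Finset.insert_erase (hfin.mem_toFinset.mpr hp), Finset.inf_insert, id_eq]
  obtain ⟨n, hn⟩ := IsNoetherianRing.isNilpotent_nilradical R
  obtain ⟨t, htJ, htp⟩ := SetLike.not_le_iff_exists.mp fun h ↦ hJp (hpp.le_of_pow_le h)
  refine ⟨t, htp, n, fun a ha ↦ ?_⟩
  have : t * a ∈ nilradical R ^ n := by
    rw [← hnil, mul_comm]
    exact (Ideal.pow_right_mono Ideal.mul_le_inf n) (mul_pow p J n ▸ Ideal.mul_mem_mul ha htJ)
  simpa [hn] using this

theorem pow_mem_annihilator_torsionBySet_pow {I : Ideal R} {r : R}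
    (hr : r ∈ (torsionBySet R M I).annihilator) (k : ℕ) :
    r ^ k ∈ (torsionBySet R M ↑(I ^ k)).annihilator := by
  induction k with
  | zero => simp [torsionBySet_univ, annihilator_bot]
  | succ k ih =>
    rw [mem_annihilator] at hr ih ⊢
    intro x hx
    have hIx : r ^ k • x ∈ torsionBySet R M I := by
      refine (mem_torsionBySet_iff _ _).mpr fun ⟨a, ha⟩ ↦ ?_
      rw [smul_comm]
      refine ih _ ((mem_torsionBySet_iff _ _).mpr fun ⟨b, hb⟩ ↦ ?_)
      rw [smul_smul]
      exact (mem_torsionBySet_iff _ _).mp hx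
        ⟨b * a, by rw [pow_succ]; exact Ideal.mul_mem_mul hb ha⟩
    rw [pow_succ', mul_smul]
    exact hr _ hIx

theorem annihilator_torsionBySet_eq_of_mem_minimalPrimes [IsNoetherianRing R] {p : Ideal R}
    (hp : p ∈ minimalPrimes R) (hM : Module.annihilator R M ≤ p) :
    (torsionBySet R M p).annihilator = p := by
  refine le_antisymm (fun r hr ↦ ?_) fun a ha ↦ mem_annihilator.mpr fun x hx ↦
    (mem_torsionBySet_iff _ _).mp hx ⟨a, ha⟩
  have hpp := IsMinimalPrime.isPrime hp
  obtain ⟨t, htp, n, ht⟩ := Ideal.exists_notMem_forall_mem_pow_mul_eq_zero hp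
  have hrt : r ^ n * t ∈ Module.annihilator R M := by
    refine Module.mem_annihilator.mpr fun x ↦ ?_
    rw [mul_smul]
    refine mem_annihilator.mp (pow_mem_annihilator_torsionBySet_pow hr n) _
      ((mem_torsionBySet_iff _ _).mpr fun ⟨a, ha⟩ ↦ ?_)
    rw [smul_smul, mul_comm, ht a ha, zero_smul]
  exact hpp.mem_of_pow_mem n ((hpp.mem_or_mem (hM hrt)).resolve_right htp)

end Annihilators

section Completion

variable {R : Type*} [CommRing R] {I : Ideal R} {M : Type*} [AddCommGroup M] [Module R M]

theorem AdicCompletion.smul_mk_eq_zero {a : R} {f : AdicCompletion.AdicCauchySequence I M}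
    (h : ∀ n, a • f n = 0) : a • AdicCompletion.mk I M f = 0 := by
  rw [← map_smul, show a • f = 0 from AdicCompletion.AdicCauchySequence.ext h, _root_.map_zero]

theorem AdicCompletion.annihilator_le :
    Module.annihilator R M ≤ Module.annihilator R (AdicCompletion I M) := by
  intro a ha
  refine Module.mem_annihilator.mpr fun x ↦ ?_
  obtain ⟨f, rfl⟩ := AdicCompletion.mk_surjective I M x
  exact AdicCompletion.smul_mk_eq_zero fun n ↦ Module.mem_annihilator.mp ha _

theorem AdicCompletion.torsionBy_eq_bot {s : R} {c : ℕ} (hc : I ^ c ≤ Ideal.span {s})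
    (hs : torsionBy R M s = ⊥) : torsionBy R (AdicCompletion I M) s = ⊥ := by
  refine eq_bot_iff.mpr fun x hx ↦ ?_
  obtain ⟨f, rfl⟩ := AdicCompletion.mk_surjective I M x
  rw [mem_torsionBy_iff, ← map_smul] at hx
  rw [mem_bot]
  ext n
  have hsf : s • f (n + c) ∈ (I ^ (n + c) • ⊤ : Submodule R M) := by
    have := congrArg (fun y ↦ y.val (n + c)) hx
    simp only [mk_apply_coe, mkQ_apply, val_zero_apply, Quotient.mk_eq_zero] at this
    exact this
  have hle : (I ^ (n + c) • ⊤ : Submodule R M) ≤ s • (I ^ n • ⊤ : Submodule R M) := by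
    rw [← ideal_span_singleton_smul, ← mul_smul, pow_add, mul_comm]
    exact smul_mono_left (Ideal.mul_mono_left hc)
  obtain ⟨v, hv, hsv⟩ := (mem_smul_pointwise_iff_exists _ _ _).mp (hle hsf)
  have hfv : f (n + c) = v := by
    rw [← sub_eq_zero, ← mem_bot R, ← hs, mem_torsionBy_iff, smul_sub, hsv, sub_self]
  rw [mk_apply_coe, mkQ_apply, val_zero_apply,
    ← AdicCauchySequence.mk_eq_mk (Nat.le_add_right n c), hfv]
  simpa [Quotient.mk_eq_zero] using hv

theorem smodEq_of_forall_smodEq_succ {N : ℕ → ℕ} (hN : Monotone N) {y : ℕ → M}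
    (hy : ∀ i, y i ≡ y (i + 1) [SMOD (I ^ N i • ⊤ : Submodule R M)]) {i j : ℕ} (hij : i ≤ j) :
    y i ≡ y j [SMOD (I ^ N i • ⊤ : Submodule R M)] := by
  induction j, hij using Nat.le_induction with
  | base => rfl
  | succ j hij ih =>
    exact ih.trans ((hy j).mono (smul_mono_left (Ideal.pow_le_pow_right (hN hij))))

section Construction

variable [IsHausdorff I M] {s : R} (hsI : s ∈ I) {U : Submodule R M}
  (hU : ∀ j, ∃ u ∈ U, s ^ j • u ≠ 0)
include hsI hU

theorem exists_smodEq_pow_smul_notMem (i n : ℕ) (y : U) :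
    ∃ n' > n, ∃ y' : U, (y : M) ≡ y' [SMOD (I ^ n • ⊤ : Submodule R M)] ∧
      s ^ i • (y' : M) ∉ (I ^ n' • ⊤ : Submodule R M) := by
  obtain ⟨y', hyy', hy'⟩ : ∃ y' : U, (y : M) ≡ y' [SMOD (I ^ n • ⊤ : Submodule R M)] ∧
      s ^ i • (y' : M) ≠ 0 := by
    by_cases hy : s ^ i • (y : M) = 0
    -- `s ^ n • u` is invisible modulo `I ^ n`, but `s ^ i` does not kill it
    · obtain ⟨u, huU, hu⟩ := hU (i + n)
      refine ⟨y + ⟨s ^ n • u, U.smul_mem _ huU⟩, ?_, ?_⟩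
      · rw [SModEq.sub_mem, coe_add, sub_add_cancel_left]
        exact neg_mem (smul_mem_smul (Ideal.pow_mem_pow hsI n) mem_top)
      · rwa [coe_add, smul_add, hy, zero_add, coe_mk, smul_smul, ← pow_add]
    · exact ⟨y, SModEq.refl _, hy⟩
  obtain ⟨m, hm⟩ : ∃ m, s ^ i • (y' : M) ∉ (I ^ m • ⊤ : Submodule R M) := by
    by_contra! h
    exact hy' (IsHausdorff.haus ‹_› _ fun m ↦ SModEq.zero.mpr (h m))
  exact ⟨max m (n + 1), by omega, y', hyy', fun h ↦
    hm (smul_mono_left (Ideal.pow_le_pow_right (le_max_left _ _)) h)⟩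

theorem exists_strictMono_seq_pow_smul_notMem :
    ∃ (N : ℕ → ℕ) (y : ℕ → U), StrictMono N ∧
      (∀ i, (y i : M) ≡ y (i + 1) [SMOD (I ^ N i • ⊤ : Submodule R M)]) ∧
      ∀ i, s ^ i • (y i : M) ∉ (I ^ N i • ⊤ : Submodule R M) := by
  choose next hnext y' hy' hnot using exists_smodEq_pow_smul_notMem hsI hU
  let seq : ℕ → ℕ × U := fun i ↦
    Nat.rec (next 0 0 0, y' 0 0 0) (fun i p ↦ (next (i + 1) p.1 p.2, y' (i + 1) p.1 p.2)) i
  refine ⟨fun i ↦ (seq i).1, fun i ↦ (seq i).2, strictMono_nat_of_lt_succ fun i ↦ hnext _ _ _,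
    fun i ↦ hy' _ _ _, ?_⟩
  rintro (_ | i)
  · exact hnot 0 0 0
  · exact hnot _ _ _

theorem exists_adicCompletion_pow_smul_ne_zero :
    ∃ x : AdicCompletion I M, U.annihilator ≤ (R ∙ x).annihilator ∧ ∀ i, s ^ i • x ≠ 0 := by
  obtain ⟨N, y, hN, hy, hnot⟩ := exists_strictMono_seq_pow_smul_notMem hsI hU
  let f := AdicCompletion.AdicCauchySequence.mk I M (fun i ↦ (y i : M)) fun i ↦
    (hy i).mono (smul_mono_left (Ideal.pow_le_pow_right (hN.id_le i)))
  refine ⟨AdicCompletion.mk I M f, fun a ha ↦ ?_, fun i h ↦ ?_⟩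
  · exact (mem_annihilator_span_singleton _ _).mpr
      (AdicCompletion.smul_mk_eq_zero fun n ↦ mem_annihilator.mp ha _ (y n).2)
  · have := congrArg (fun z ↦ z.val (N i)) h
    rw [AdicCompletion.val_smul_apply, AdicCompletion.mk_apply_coe, ← map_smul,
      AdicCompletion.val_zero_apply, mkQ_apply, Quotient.mk_eq_zero] at this
    refine hnot i (SModEq.zero.mp ?_)
    exact ((smodEq_of_forall_smodEq_succ hN.monotone hy (hN.id_le i)).smul _).trans
      (SModEq.zero.mpr this)

end Construction

end Completion

section DimensionOne

variable {R : Type*} [CommRing R] [IsLocalRing R] [Ring.KrullDimLE 1 R]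
  {M : Type*} [AddCommGroup M] [Module R M]

theorem eq_maximalIdeal_of_lt {p q : Ideal R} (hp : p.IsPrime) (hq : q.IsPrime) (hpq : p < q) :
    q = maximalIdeal R := by
  rcases Ring.krullDimLE_one_iff.mp ‹_› q hq with hmin | hmax
  · exact absurd (hmin.2 ⟨hp, bot_le⟩ hpq.le) (not_le_of_gt hpq)
  · exact eq_maximalIdeal hmax

theorem mem_minimalPrimes_of_ne_maximalIdeal {p : Ideal R} (hp : p.IsPrime)
    (hpm : p ≠ maximalIdeal R) : p ∈ minimalPrimes R :=
  (Ring.krullDimLE_one_iff.mp ‹_› p hp).resolve_right fun hmax ↦ hpm (eq_maximalIdeal hmax)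

theorem maximalIdeal_le_radical_of_lt {p J : Ideal R} (hp : p.IsPrime) (hpJ : p < J) :
    maximalIdeal R ≤ J.radical := by
  rw [Ideal.radical_eq_sInf]
  exact le_sInf fun Q ⟨hJQ, hQ⟩ ↦ (eq_maximalIdeal_of_lt hp hQ (hpJ.trans_le hJQ)).ge

variable (R) in
theorem exists_pow_maximalIdeal_le_span_singleton [IsNoetherianRing R] :
    ∃ s ∈ maximalIdeal R, ∃ c : ℕ, maximalIdeal R ^ c ≤ Ideal.span {s} := by
  obtain ⟨S, hS, hheight⟩ := (maximalIdeal R).exists_finset_card_eq_height_of_isNoetherianRing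
  have hcard : S.card ≤ 1 := by
    have := Ring.krullDimLE_iff.mp ‹_›
    rw [← maximalIdeal_height_eq_ringKrullDim, ← hheight] at this
    exact_mod_cast this
  obtain ⟨s, hsm, hSs⟩ : ∃ s ∈ maximalIdeal R, S ⊆ {s} := by
    rcases Finset.card_le_one_iff_subset_singleton.mp hcard with ⟨s, hSs⟩
    rcases Finset.subset_singleton_iff.mp hSs with rfl | rfl
    · exact ⟨0, zero_mem _, Finset.empty_subset _⟩
    · exact ⟨s, hS.1.2 (Ideal.subset_span (by simp)), subset_rfl⟩
  have hrad : maximalIdeal R ≤ (Ideal.span {s}).radical := by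
    rw [Ideal.radical_eq_sInf]
    refine le_sInf fun Q ⟨hsQ, hQ⟩ ↦ hS.2 ⟨hQ, le_trans ?_ hsQ⟩ (le_maximalIdeal hQ.ne_top)
    exact Ideal.span_mono (by simpa only [Finset.coe_singleton] using Finset.coe_subset.mpr hSs)
  obtain ⟨c, hc⟩ := Ideal.exists_pow_le_of_le_radical_of_fg hrad (IsNoetherian.noetherian _)
  exact ⟨s, hsm, c, hc⟩

theorem annihilator_span_singleton_eq_of_forall_pow_smul_ne_zero {p : Ideal R} (hp : p.IsPrime)
    {s : R} (hs : s ∈ maximalIdeal R) {x : M} (hpx : p ≤ (R ∙ x).annihilator)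
    (hsx : ∀ i, s ^ i • x ≠ 0) : (R ∙ x).annihilator = p := by
  by_contra hne
  obtain ⟨i, hi⟩ := maximalIdeal_le_radical_of_lt hp (lt_of_le_of_ne hpx (Ne.symm hne)) hs
  exact hsx i ((mem_annihilator_span_singleton _ _).mp hi)

theorem maximalIdeal_mem_associatedPrimes_of_adicCompletion [IsNoetherianRing R]
    (h : maximalIdeal R ∈ associatedPrimes R (AdicCompletion (maximalIdeal R) M)) :
    maximalIdeal R ∈ associatedPrimes R M := by
  obtain ⟨s, hsm, c, hc⟩ := exists_pow_maximalIdeal_le_span_singleton R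
  refine mem_associatedPrimes_of_torsionBy_ne_bot (maximalIdeal.isMaximal R) hc fun hs ↦ ?_
  obtain ⟨-, x, hx⟩ := isAssociatedPrime_iff.mp h
  have hxs : x ∈ torsionBy R _ s := by
    simpa [hx, mem_colon_singleton] using hsm
  rw [AdicCompletion.torsionBy_eq_bot hc hs, mem_bot] at hxs
  refine (maximalIdeal.isMaximal R).ne_top ?_
  rw [hx, hxs, Ideal.eq_top_iff_one, mem_colon_singleton, one_smul]
  exact zero_mem _

theorem mem_associatedPrimes_adicCompletion_of_mem_koatt [IsHausdorff (maximalIdeal R) M]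
    {p : Ideal R} (hpm : p ≠ maximalIdeal R) (h : p ∈ Koatt R M) :
    p ∈ associatedPrimes R (AdicCompletion (maximalIdeal R) M) := by
  obtain ⟨hp, U, hU⟩ := h
  obtain ⟨s, hsm, hsp⟩ := SetLike.exists_of_lt ((le_maximalIdeal hp.ne_top).lt_of_ne hpm)
  have hsU : ∀ j, ∃ u ∈ U, s ^ j • u ≠ 0 := by
    intro j
    by_contra! hj
    exact hsp (hp.mem_of_pow_mem j (hU ▸ mem_annihilator.mpr hj))
  obtain ⟨x, hUx, hsx⟩ := exists_adicCompletion_pow_smul_ne_zero hsm hsU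
  exact isAssociatedPrime_of_annihilator_eq hp
    (annihilator_span_singleton_eq_of_forall_pow_smul_ne_zero hp hsm (hU ▸ hUx) hsx)

end DimensionOne

theorem ass_completion_eq_koatt_of_dim_le_one
    (R : Type u) [CommRing R] [IsNoetherianRing R] [IsLocalRing R]
    (hdim : ringKrullDim R ≤ 1)
    (M : Type v) [AddCommGroup M] [Module R M]
    [IsHausdorff (maximalIdeal R) M] :
    associatedPrimes R (AdicCompletion (maximalIdeal R) M) = Koatt R M := by
  have : Ring.KrullDimLE 1 R := Ring.krullDimLE_iff.mpr hdim
  ext p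
  by_cases hpm : p = maximalIdeal R
  · subst hpm
    refine ⟨fun h ↦ associatedPrimes_subset_koatt
      (maximalIdeal_mem_associatedPrimes_of_adicCompletion h), fun h ↦ ?_⟩
    exact associatedPrimes.subset_of_injective (AdicCompletion.of_injective _ M)
      (mem_associatedPrimes_of_isMaximal_of_mem_koatt (maximalIdeal.isMaximal R) h)
  · refine ⟨fun h ↦ ⟨h.isPrime, torsionBySet R M p, ?_⟩,
      mem_associatedPrimes_adicCompletion_of_mem_koatt hpm⟩
    refine annihilator_torsionBySet_eq_of_mem_minimalPrimes
      (mem_minimalPrimes_of_ne_maximalIdeal h.isPrime hpm) ?_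
    refine (AdicCompletion.annihilator_le (I := maximalIdeal R)).trans ?_
    rw [← annihilator_top]
    exact h.annihilator_le
end

section
/- Let (R, m) be a commutative Noetherian local ring with Krull dimension dim(R) ≤ 1. Then every separated flat R-module is totally separated. -/
/-!
Over a Noetherian ring, a short exact sequence of finitely generated modules stays exact after
tensoring with the flat module `M`, and the Artin–Rees lemma makes the `m`-adic topology of the
submodule the induced one; so the finitely generated `X` with `X ⊗ M` separated are closed under
extensions. A prime filtration then reduces the theorem to `X = R ⧸ p`, that is, to `M ⧸ pM`.
For `p = m` this module is killed by `m`. Otherwise `p` is a minimal prime (as `dim R ≤ 1`), hence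
the annihilator of some `σ`, and `x ↦ σx` embeds `M ⧸ pM` into `M` by flatness. Since
`m^c ≤ p + (tⁿ)` for some `c` whenever `t ∈ m \ p`, this embedding sends `⋂ mⁿ (M ⧸ pM)` into
`⋂ mⁿ M = 0`.
-/

open IsLocalRing TensorProduct

universe u v

/-- `M` is totally separated if `X ⊗ M` is (m-adically) separated for every
finitely generated `R`-module `X`. -/
def TotallySeparated (R : Type u) [CommRing R] [IsLocalRing R]
    (M : Type v) [AddCommGroup M] [Module R M] : Prop :=
  ∀ (X : Type u) [AddCommGroup X] [Module R X], Module.Finite R X →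
    IsHausdorff (maximalIdeal R) (TensorProduct R X M)

section CommRing

variable {R : Type*} [CommRing R] {I : Ideal R}
  {M N P : Type*} [AddCommGroup M] [Module R M] [AddCommGroup N] [Module R N]
  [AddCommGroup P] [Module R P]

theorem IsHausdorff.of_linearEquiv (e : N ≃ₗ[R] P) [IsHausdorff I N] : IsHausdorff I P := by
  refine ⟨fun x hx ↦ e.symm.injective ?_⟩
  rw [map_zero]
  exact IsHausdorff.haus ‹_› _ fun n ↦ SModEq.zero.2 <|
    Submodule.smul_top_le_comap_smul_top (I ^ n) e.symm.toLinearMap (SModEq.zero.1 (hx n))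

theorem isHausdorff_quotient_smul_top (I : Ideal R) :
    IsHausdorff I (M ⧸ I • (⊤ : Submodule R M)) := by
  refine ⟨fun x hx ↦ ?_⟩
  have hbot : (I • ⊤ : Submodule R (M ⧸ I • (⊤ : Submodule R M))) = ⊥ := by
    rw [← Submodule.range_mkQ, LinearMap.range_eq_map, ← Submodule.map_smul'',
      Submodule.mkQ_map_self]
  simpa [hbot] using SModEq.zero.1 (hx 1)

theorem TensorProduct.ker_rTensor_mkQ_smul_top (J : Ideal R) :
    LinearMap.ker ((J • ⊤ : Submodule R N).mkQ.rTensor M) = J • ⊤ := by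
  let e : (N ⧸ J • (⊤ : Submodule R N)) ⊗[R] M ≃ₗ[R]
      (N ⊗[R] M) ⧸ J • (⊤ : Submodule R (N ⊗[R] M)) :=
    (quotTensorEquivQuotSMul N J).symm.rTensor M ≪≫ₗ TensorProduct.assoc R (R ⧸ J) N M ≪≫ₗ
      quotTensorEquivQuotSMul (N ⊗[R] M) J
  have he : e.toLinearMap ∘ₗ (J • ⊤ : Submodule R N).mkQ.rTensor M =
      (J • ⊤ : Submodule R (N ⊗[R] M)).mkQ :=
    TensorProduct.ext' fun x m ↦ by simp [e]
  rw [← LinearEquiv.ker_comp e, he, Submodule.ker_mkQ]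

theorem Module.Flat.mem_colon_smul_top_of_smul_eq_zero [Module.Flat R M] {a : R} {x : M}
    (h : a • x = 0) : x ∈ (⊥ : Submodule R R).colon {a} • (⊤ : Submodule R M) := by
  obtain ⟨k, c, y, hx, hc⟩ := Module.Flat.isTrivialRelation_of_sum_smul_eq_zero
    (f := fun _ : Unit ↦ a) (x := fun _ ↦ x) (by simpa using h)
  rw [show x = _ from hx ()]
  refine Submodule.sum_mem _ fun j _ ↦ Submodule.smul_mem_smul ?_ Submodule.mem_top
  simpa [Submodule.mem_colon_singleton, mul_comm] using hc j

theorem Ideal.exists_comap_pow_add_smul_top_le [IsNoetherianRing R] [Module.Finite R P]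
    (I : Ideal R) {f : N →ₗ[R] P} (hf : Function.Injective f) :
    ∃ k, ∀ n, (I ^ (n + k) • ⊤ : Submodule R P).comap f ≤ I ^ n • ⊤ := by
  obtain ⟨k, hk⟩ := I.exists_pow_inf_eq_pow_smul (LinearMap.range f)
  refine ⟨k, fun n x hx ↦ ?_⟩
  have hfx : f x ∈ I ^ n • (I ^ k • ⊤ ⊓ LinearMap.range f) := by
    have : f x ∈ I ^ (n + k) • ⊤ ⊓ LinearMap.range f := ⟨hx, x, rfl⟩
    rwa [hk (n + k) (by omega), Nat.add_sub_cancel] at this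
  rw [← Submodule.comap_map_eq_of_injective hf (I ^ n • ⊤), Submodule.map_smul'',
    Submodule.map_top]
  exact Submodule.smul_mono le_rfl inf_le_right hfx

theorem IsHausdorff.rTensor_of_exact [IsNoetherianRing R] [Module.Flat R M]
    {N₁ N₂ N₃ : Type*} [AddCommGroup N₁] [Module R N₁] [AddCommGroup N₂] [Module R N₂]
    [AddCommGroup N₃] [Module R N₃] [Module.Finite R N₂]
    {f : N₁ →ₗ[R] N₂} {g : N₂ →ₗ[R] N₃} (hf : Function.Injective f) (hg : Function.Surjective g)
    (hfg : Function.Exact f g) (h₁ : IsHausdorff I (N₁ ⊗[R] M))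
    (h₃ : IsHausdorff I (N₃ ⊗[R] M)) : IsHausdorff I (N₂ ⊗[R] M) := by
  refine ⟨fun z hz ↦ ?_⟩
  simp only [SModEq.zero] at hz
  have hgz : g.rTensor M z = 0 := h₃.haus _ fun n ↦ SModEq.zero.2 <|
    Submodule.smul_top_le_comap_smul_top _ _ (hz n)
  obtain ⟨w, rfl⟩ := (rTensor_exact M hfg hg z).1 hgz
  suffices w = 0 by rw [this, map_zero]
  refine h₁.haus w fun n ↦ SModEq.zero.2 ?_
  obtain ⟨k, hk⟩ := I.exists_comap_pow_add_smul_top_le hf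
  set K := (I ^ (n + k) • ⊤ : Submodule R N₂).comap f
  have hφ : Function.Injective ((K.mapQ _ f le_rfl).rTensor M) := by
    refine Module.Flat.rTensor_preserves_injective_linearMap _ ?_
    rw [← LinearMap.ker_eq_bot, Submodule.ker_mapQ, Submodule.mkQ_map_self]
  have hw : K.mkQ.rTensor M w = 0 := by
    refine hφ ?_
    rw [map_zero, ← LinearMap.comp_apply, ← LinearMap.rTensor_comp, Submodule.mapQ_mkQ,
      LinearMap.rTensor_comp, LinearMap.comp_apply, ← LinearMap.mem_ker,
      TensorProduct.ker_rTensor_mkQ_smul_top]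
    exact hz (n + k)
  rw [← TensorProduct.ker_rTensor_mkQ_smul_top, LinearMap.mem_ker,
    ← Submodule.factor_comp_mk (hk n), LinearMap.rTensor_comp, LinearMap.comp_apply, hw,
    map_zero]

end CommRing

section DimLEOne

variable {R : Type*} [CommRing R] [IsLocalRing R] [IsNoetherianRing R] [Ring.KrullDimLE 1 R]
  {M : Type*} [AddCommGroup M] [Module R M]

theorem IsLocalRing.exists_maximalIdeal_pow_le_sup_span {p : Ideal R}
    (hp : p ∈ minimalPrimes R) {s : R} (hs : s ∉ p) :
    ∃ c, maximalIdeal R ^ c ≤ p ⊔ Ideal.span {s} := by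
  refine Ideal.exists_pow_le_of_le_radical_of_fg ?_ (IsNoetherian.noetherian _)
  rw [Ideal.radical_eq_sInf]
  refine le_sInf fun q ⟨hpq, hq⟩ ↦ ?_
  rcases Ring.krullDimLE_one_iff.1 ‹_› q hq with hmin | hmax
  · have hqp : q ≤ p := hmin.2 ⟨hp.1.1, bot_le⟩ (le_sup_left.trans hpq)
    exact absurd (hqp (hpq (Ideal.mem_sup_right (Ideal.mem_span_singleton_self s)))) hs
  · exact (IsLocalRing.eq_maximalIdeal hmax).ge

variable [Module.Flat R M] [IsHausdorff (maximalIdeal R) M]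

theorem isHausdorff_quotient_smul_top_of_mem_minimalPrimes {p : Ideal R}
    (hp : p ∈ minimalPrimes R) (hpm : p ≠ maximalIdeal R) :
    IsHausdorff (maximalIdeal R) (M ⧸ p • (⊤ : Submodule R M)) := by
  obtain ⟨σ, hσ⟩ : ∃ σ : R, p = (⊥ : Submodule R R).colon {σ} := by
    have hann : Module.annihilator R R = ⊥ := Module.annihilator_eq_bot.2 inferInstance
    have := Module.associatedPrimes.minimalPrimes_annihilator_subset_associatedPrimes R R
      (by rwa [hann])
    exact (isAssociatedPrime_iff.1 this).2
  have hσp : ∀ a ∈ p, σ * a = 0 := fun a ha ↦ by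
    rw [hσ, Submodule.mem_colon_singleton] at ha
    simpa [mul_comm] using ha
  obtain ⟨t, htm, htp⟩ : ∃ t ∈ maximalIdeal R, t ∉ p :=
    SetLike.exists_of_lt ((le_maximalIdeal hp.1.1.ne_top).lt_of_ne hpm)
  refine ⟨fun x hx ↦ ?_⟩
  obtain ⟨x, rfl⟩ := Submodule.mkQ_surjective _ x
  have hσx : ∀ n, σ • x ∈ (maximalIdeal R ^ n • ⊤ : Submodule R M) := fun n ↦ by
    obtain ⟨c, hc⟩ := exists_maximalIdeal_pow_le_sup_span hp (s := t ^ n)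
      fun h ↦ htp (hp.1.1.mem_of_pow_mem n h)
    have hxc : x ∈ (p ⊔ Ideal.span {t ^ n}) • (⊤ : Submodule R M) := by
      have := SModEq.zero.1 (hx c)
      rw [← Submodule.mem_comap,
        Submodule.comap_smul_top_of_surjective _ _ (Submodule.mkQ_surjective _),
        Submodule.ker_mkQ, ← Submodule.sup_smul] at this
      exact Submodule.smul_mono (sup_le hc le_sup_left) le_rfl this
    have hle : Ideal.span {σ} * (p ⊔ Ideal.span {t ^ n}) ≤ maximalIdeal R ^ n := by
      refine Ideal.span_singleton_mul_le_iff.2 fun z hz ↦ ?_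
      obtain ⟨a, ha, b, hb, rfl⟩ := Submodule.mem_sup.1 hz
      obtain ⟨r, rfl⟩ := Ideal.mem_span_singleton'.1 hb
      rw [mul_add, hσp a ha, zero_add, mul_left_comm]
      exact Ideal.mul_mem_left _ _ (Ideal.mul_mem_left _ _ (Ideal.pow_mem_pow htm n))
    refine Submodule.smul_mono hle le_rfl ?_
    rw [Submodule.mul_smul]
    exact Submodule.smul_mem_smul (Ideal.mem_span_singleton_self σ) hxc
  have := Module.Flat.mem_colon_smul_top_of_smul_eq_zero
    (‹IsHausdorff (maximalIdeal R) M›.haus _ fun n ↦ SModEq.zero.2 (hσx n))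
  rw [← hσ] at this
  simpa using this

theorem isHausdorff_quotient_tensor_of_isPrime {p : Ideal R} (hp : p.IsPrime) :
    IsHausdorff (maximalIdeal R) ((R ⧸ p) ⊗[R] M) := by
  have : IsHausdorff (maximalIdeal R) (M ⧸ p • (⊤ : Submodule R M)) := by
    obtain rfl | hpm := eq_or_ne p (maximalIdeal R)
    · exact isHausdorff_quotient_smul_top _
    have hmin : p ∈ minimalPrimes R := (Ring.krullDimLE_one_iff.1 ‹_› p hp).resolve_right
      fun hmax ↦ hpm (eq_maximalIdeal hmax)
    exact isHausdorff_quotient_smul_top_of_mem_minimalPrimes hmin hpm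
  exact .of_linearEquiv (quotTensorEquivQuotSMul M p).symm

end DimLEOne

theorem totallySeparated_of_flat_of_separated_of_dim_le_one
    (R : Type u) [CommRing R] [IsNoetherianRing R] [IsLocalRing R]
    (hdim : ringKrullDim R ≤ 1)
    (M : Type v) [AddCommGroup M] [Module R M]
    (hflat : Module.Flat R M) [IsHausdorff (maximalIdeal R) M] :
    TotallySeparated R M := by
  have : Ring.KrullDimLE 1 R := Ring.krullDimLE_iff.2 (by exact_mod_cast hdim)
  intro X _ _ hX
  induction hX using IsNoetherianRing.induction_on_isQuotientEquivQuotientPrime R with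
  | subsingleton N => infer_instance
  | quotient N p e =>
    have := isHausdorff_quotient_tensor_of_isPrime (M := M) p.2
    exact .of_linearEquiv (e.symm.rTensor M)
  | exact N₁ N₂ N₃ f g hf hg hfg h₁ h₃ => exact h₁.rTensor_of_exact hf hg hfg h₃
end
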